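/- Let C : ℝ^L → ℝ be continuous and strictly increasing in each coordinate, and let s be a point with C(s) ≤ 0 and s_k > b_k for some coordinate k, where b_k is a lower bound on coordinate k. Then for any other coordinate j ≠ k there exist ε > 0 and δ > 0 with s_k − ε ≥ b_k such that C(s − ε e_k + δ e_j) ≤ 0; in particular, any continuous strictly increasing function of coordinate j can be strictly increased while remaining feasible. -/

import Mathlib

def StrictIncEach {L : ℕ} (f : (Fin L → ℝ) → ℝ) : Prop :=
  ∀ s : Fin L → ℝ, ∀ i : Fin L, ∀ x : ℝ, s i < x → f s < f (Function.update s i x)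

/-! Lowering coordinate `k` strictly below `s k` makes the constraint strictly slack by strict
monotonicity; by continuity of `C` along coordinate `j`, that slack survives a small increase
`δ` of coordinate `j`. -/

open Filter Topology

theorem StrictIncEach.apply_update_lt {L : ℕ} {f : (Fin L → ℝ) → ℝ} (hf : StrictIncEach f)
    (s : Fin L → ℝ) (i : Fin L) {x : ℝ} (hx : x < s i) : f (Function.update s i x) < f s := by
  simpa using hf (Function.update s i x) i (s i) (by simpa using hx)

theorem Continuous.exists_pos_apply_update_add_lt {ι : Type*} [DecidableEq ι]
    {f : (ι → ℝ) → ℝ} (hf : Continuous f) {p : ι → ℝ} {c : ℝ} (hp : f p < c) (j : ι) :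
    ∃ δ > 0, f (Function.update p j (p j + δ)) < c := by
  have hcont : Continuous fun t => f (Function.update p j t) :=
    hf.comp (continuous_const.update j continuous_id)
  have hnear : ∀ᶠ t in 𝓝[>] (p j), f (Function.update p j t) < c :=
    nhdsWithin_le_nhds (hcont.continuousAt.eventually_lt continuousAt_const (by simpa using hp))
  obtain ⟨t, ht, hlt⟩ := (hnear.and self_mem_nhdsWithin).exists
  exact ⟨t - p j, sub_pos.2 hlt, by simpa using ht⟩

/-- Trade-off lemma: an attribute above its floor can be traded for a strict
increase in any other attribute while preserving feasibility. -/
theorem stmt_10 {L : ℕ} (C : (Fin L → ℝ) → ℝ) (hCc : Continuous C) (hCm : StrictIncEach C)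
    (s : Fin L → ℝ) (hs : C s ≤ 0)
    (k : Fin L) (bk : ℝ) (hbk : bk < s k)
    (j : Fin L) (hjk : j ≠ k) :
    ∃ ε : ℝ, 0 < ε ∧ ∃ δ : ℝ, 0 < δ ∧ bk ≤ s k - ε ∧
      C (Function.update (Function.update s k (s k - ε)) j (s j + δ)) ≤ 0 ∧
      ∀ g : ℝ → ℝ, Continuous g → StrictMono g → g (s j) < g (s j + δ) := by
  set ε := (s k - bk) / 2 with hε
  have hlowered : C (Function.update s k (s k - ε)) < 0 :=
    (hCm.apply_update_lt s k (by linarith)).trans_le hs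
  obtain ⟨δ, hδ, hC⟩ := hCc.exists_pos_apply_update_add_lt hlowered j
  rw [Function.update_of_ne hjk] at hC
  exact ⟨ε, by linarith, δ, hδ, by linarith, hC.le, fun g _ hg => hg (by linarith)⟩
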